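/- Let C be a vertex cover of a graph G, let (P,𝒳) be a nice path decomposition of G, and let (L^C,X^C,R^C) be a three-partition of C such that at least one node of P has trace (L^C,X^C,R^C) on C. Then the set of nodes of P whose trace on C equals (L^C,X^C,R^C) forms a connected subpath of P, from a lowest node imin to a highest node imax (this holds even when L^C=∅). -/
import Mathlib


open scoped Classical

noncomputable section

/-- Operations labelling the nodes of a nice tree decomposition.  For a `join`
we record the trace of the bag on the vertex cover together with the traces of
the lower sets of the two children. -/
inductive TDOp (V : Type) where
  | introduce (u : V)
  | forget (u : V)
  | join (X L1 L2 : Set V)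

/-- `i` is an ancestor of `j` (inclusively) with respect to the parent function `parent`. -/
def ancestorOf {ι : Type} (parent : ι → ι) (i j : ι) : Prop :=
  ∃ n : ℕ, parent^[n] j = i

/-- `k` lies on the unique tree path between `i` and `j` in the rooted tree given by `parent`. -/
def betweenNodes {ι : Type} (parent : ι → ι) (k i j : ι) : Prop :=
  (ancestorOf parent k i ∨ ancestorOf parent k j) ∧
    ∀ l, ancestorOf parent l i → ancestorOf parent l j → ancestorOf parent l k

/-- A rooted tree decomposition of a graph `G`, encoded via a parent function on the
node set `ι`:  every node reaches the root by iterating `parent`; the bags cover the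
vertices and the edges, and the set of bags containing a fixed vertex is connected
(it is closed under taking nodes on tree paths). -/
structure RootedTreeDecomp (V ι : Type) (G : SimpleGraph V) where
  root : ι
  parent : ι → ι
  parent_root : parent root = root
  reaches_root : ∀ i, ancestorOf parent root i
  bag : ι → Finset V
  bag_cover : ∀ v, ∃ i, v ∈ bag i
  bag_edge : ∀ u v, G.Adj u v → ∃ i, u ∈ bag i ∧ v ∈ bag i
  bag_conn : ∀ v i j k, v ∈ bag i → v ∈ bag j → betweenNodes parent k i j → v ∈ bag k

namespace RootedTreeDecomp

variable {V ι : Type} {G : SimpleGraph V} (t : RootedTreeDecomp V ι G)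

/-- `i` is an ancestor of `j` (inclusively). -/
def anc (i j : ι) : Prop := ancestorOf t.parent i j

/-- `V_i` : the union of the bags of the subtree rooted at `i`. -/
def subVerts (i : ι) : Set V := {v | ∃ j, t.anc i j ∧ v ∈ t.bag j}

/-- `L_i = V_i ∖ X_i`. -/
def Lset (i : ι) : Set V := t.subVerts i \ ↑(t.bag i)

/-- `R_i = V ∖ V_i`. -/
def Rset (i : ι) : Set V := Set.univ \ t.subVerts i

/-- The trace of node `i` on `C` is the three-partition `(L_i ∩ C, X_i ∩ C, R_i ∩ C)` of `C`. -/
def HasTrace (C : Set V) (i : ι) (LC XC RC : Set V) : Prop :=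
  LC = t.Lset i ∩ C ∧ XC = (↑(t.bag i) : Set V) ∩ C ∧ RC = t.Rset i ∩ C

/-- The children of a node. -/
def children (i : ι) : Set ι := {j | j ≠ t.root ∧ t.parent j = i}

/-- A leaf node: no children and a bag of size one. -/
def IsLeafNode (i : ι) : Prop := t.children i = ∅ ∧ ∃ u, t.bag i = {u}

/-- An introduce node. -/
def IsIntroduceNode [DecidableEq V] (i : ι) : Prop :=
  ∃ j u, t.children i = {j} ∧ u ∉ t.bag j ∧ t.bag i = insert u (t.bag j)

/-- A forget node. -/
def IsForgetNode [DecidableEq V] (i : ι) : Prop :=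
  ∃ j u, t.children i = {j} ∧ u ∈ t.bag j ∧ t.bag i = (t.bag j).erase u

/-- A join node. -/
def IsJoinNode (i : ι) : Prop :=
  ∃ j k, j ≠ k ∧ t.children i = ({j, k} : Set ι) ∧ t.bag j = t.bag i ∧ t.bag k = t.bag i

/-- A nice tree decomposition: every node is a leaf, introduce, forget or join node. -/
def IsNice [DecidableEq V] : Prop :=
  ∀ i, t.IsLeafNode i ∨ t.IsIntroduceNode i ∨ t.IsForgetNode i ∨ t.IsJoinNode i

/-- A nice path decomposition: every node is a leaf, introduce or forget node. -/
def IsNicePath [DecidableEq V] : Prop :=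
  ∀ i, t.IsLeafNode i ∨ t.IsIntroduceNode i ∨ t.IsForgetNode i

/-- The operation `op` is the operation `τ_i` performed at node `i`
(join operations are recorded through their traces on the vertex cover `C`). -/
def HasOp [DecidableEq V] (C : Set V) (i : ι) : TDOp V → Prop
  | TDOp.introduce u =>
      (t.children i = ∅ ∧ t.bag i = {u}) ∨
        ∃ j, t.children i = {j} ∧ u ∉ t.bag j ∧ t.bag i = insert u (t.bag j)
  | TDOp.forget u =>
      ∃ j, t.children i = {j} ∧ u ∈ t.bag j ∧ t.bag i = (t.bag j).erase u
  | TDOp.join X L1 L2 =>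
      ∃ j k, j ≠ k ∧ t.children i = ({j, k} : Set ι) ∧ t.bag j = t.bag i ∧ t.bag k = t.bag i ∧
        X = (↑(t.bag i) : Set V) ∩ C ∧ L1 = t.Lset j ∩ C ∧ L2 = t.Lset k ∩ C

/-- The width of a rooted tree decomposition: maximum bag size minus one. -/
def width [Fintype ι] : ℕ := (Finset.univ.sup fun i => (t.bag i).card) - 1

end RootedTreeDecomp

/-- A quintuple `(τ₋, L^C, X^C, R^C, τ₊)`. -/
structure TDQuint (V : Type) where
  tauL : TDOp V
  LC : Set V
  XC : Set V
  RC : Set V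
  tauR : TDOp V

/-- `C` is a vertex cover of `G`. -/
def IsVertexCover {V : Type} (G : SimpleGraph V) (C : Set V) : Prop :=
  ∀ u v, G.Adj u v → u ∈ C ∨ v ∈ C

/-- `X` separates `A` from `B` in the subgraph of `G` induced by `D`: there is no walk
between a vertex of `A` and a vertex of `B` all of whose vertices avoid `X` and stay in `D`. -/
def SeparatesIn {V : Type} (G : SimpleGraph V) (D X A B : Set V) : Prop :=
  ∀ a ∈ A, ∀ b ∈ B, ¬ ∃ p : G.Walk a b, ∀ v ∈ p.support, v ∈ D \ X

/-- `(LC, XC, RC)` is a valid partition of `C`: it is the trace on `C` of some node of some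
rooted tree decomposition of `G`. -/
def ValidPartition {V : Type} (G : SimpleGraph V) (C LC XC RC : Set V) : Prop :=
  ∃ (ι : Type) (t : RootedTreeDecomp V ι G) (i : ι), t.HasTrace C i LC XC RC

section

variable {V ι : Type} [DecidableEq V] {G : SimpleGraph V}

/-- The decomposition `t` respects the (non-degenerate) quintuple `Q`, with `imin` and `imax`
as lowest and highest nodes of the subpath of nodes whose trace on `C` is `(LC, XC, RC)`:
the operation at `imin` is `τ₋`, and the operation at the father of `imax` is `τ₊`
(taken to be `forget w` on the root bag `{w}` when `imax` is the root). -/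
def RespectsAtND (t : RootedTreeDecomp V ι G) (C : Set V) (Q : TDQuint V)
    (imin imax : ι) : Prop :=
  t.HasTrace C imin Q.LC Q.XC Q.RC ∧ t.HasTrace C imax Q.LC Q.XC Q.RC ∧ t.anc imax imin ∧
    (∀ i, t.HasTrace C i Q.LC Q.XC Q.RC → t.anc i imin ∧ t.anc imax i) ∧
    t.HasOp C imin Q.tauL ∧
    ((imax = t.root ∧ ∃ w, t.bag t.root = {w} ∧ Q.tauR = TDOp.forget w) ∨
      (imax ≠ t.root ∧ t.HasOp C (t.parent imax) Q.tauR))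

/-- The decomposition `t` respects the degenerate quintuple `Q` at node `i`: node `i` has
trace `(∅, XC, RC)` on `C` and its father performs the forget operation `τ₊`. -/
def RespectsAtDeg (t : RootedTreeDecomp V ι G) (C : Set V) (Q : TDQuint V) (i : ι) : Prop :=
  t.HasTrace C i Q.LC Q.XC Q.RC ∧
    ∃ u, Q.tauR = TDOp.forget u ∧ i ≠ t.root ∧ t.HasOp C (t.parent i) (TDOp.forget u)

/-- The decomposition `t` respects the quintuple `Q`, witnessed by the nodes `imin`, `imax`. -/
def RespectsAt (t : RootedTreeDecomp V ι G) (C : Set V) (Q : TDQuint V)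
    (imin imax : ι) : Prop :=
  (Q.LC ≠ ∅ ∧ RespectsAtND t C Q imin imax) ∨
    (Q.LC = ∅ ∧ imin = imax ∧ RespectsAtDeg t C Q imax)

/-- The decomposition `t` respects the quintuple `Q`. -/
def Respects (t : RootedTreeDecomp V ι G) (C : Set V) (Q : TDQuint V) : Prop :=
  ∃ imin imax, RespectsAt t C Q imin imax

end

/-- Valid quintuples (tree-decomposition version), including the degenerate ones. -/
def ValidQuintT {V : Type} [DecidableEq V] (G : SimpleGraph V) (C : Set V)
    (Q : TDQuint V) : Prop :=
  (Q.LC ≠ ∅ ∧ ∃ (ι : Type) (t : RootedTreeDecomp V ι G), t.IsNice ∧ Respects t C Q) ∨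
    (Q.LC = ∅ ∧ ValidPartition G C ∅ Q.XC Q.RC ∧
      ∃ u, u ∈ Q.XC ∧ G.neighborSet u ⊆ Q.XC ∧ Q.tauR = TDOp.forget u)

/-- Valid quintuples (path-decomposition version): `Q` is respected by some nice path
decomposition of `G`. -/
def ValidQuintP {V : Type} [DecidableEq V] (G : SimpleGraph V) (C : Set V)
    (Q : TDQuint V) : Prop :=
  ∃ (ι : Type) (t : RootedTreeDecomp V ι G), t.IsNicePath ∧
    ∃ imin imax, RespectsAtND t C Q imin imax

section

variable {V : Type} [DecidableEq V]

/-- `XTR^S(Q)`: vertices of `S = V ∖ C` having neighbours in both `L^C` and `R^C`. -/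
def XTRset (G : SimpleGraph V) (C : Set V) (Q : TDQuint V) : Set V :=
  {x | x ∉ C ∧ (G.neighborSet x ∩ Q.LC).Nonempty ∧ (G.neighborSet x ∩ Q.RC).Nonempty}

/-- `XL^S(Q)`. -/
def XLset (G : SimpleGraph V) (C : Set V) (Q : TDQuint V) : Set V :=
  match Q.tauL with
  | TDOp.introduce u =>
      {x | x ∉ C ∧ G.neighborSet x ⊆ Q.LC ∪ Q.XC ∧ u ∈ G.neighborSet x ∧
        (G.neighborSet x ∩ Q.LC).Nonempty}
  | TDOp.forget _ => ∅
  | TDOp.join _ L1 L2 =>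
      {x | x ∉ C ∧ (G.neighborSet x ∩ L1).Nonempty ∧ (G.neighborSet x ∩ L2).Nonempty ∧
        G.neighborSet x ∩ Q.RC = ∅}

/-- `XR^S(Q)`. -/
def XRset (G : SimpleGraph V) (C : Set V) (Q : TDQuint V) : Set V :=
  match Q.tauR with
  | TDOp.forget v =>
      {x | x ∉ C ∧ G.neighborSet x ⊆ Q.RC ∪ Q.XC ∧ v ∈ G.neighborSet x ∧
        (G.neighborSet x ∩ Q.RC).Nonempty}
  | _ => ∅

/-- `ε(Q)` (treewidth version): `1` if some vertex of `S` has neighbourhood exactly `X^C`. -/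
def epsT (G : SimpleGraph V) (C : Set V) (Q : TDQuint V) : ℕ :=
  if ∃ x, x ∉ C ∧ G.neighborSet x = Q.XC then 1 else 0

/-- The local treewidth of a quintuple. -/
def loctw (G : SimpleGraph V) (C : Set V) (Q : TDQuint V) : ℕ :=
  Q.XC.ncard +
    max (max ((XTRset G C Q).ncard + (XLset G C Q).ncard)
      ((XTRset G C Q).ncard + (XRset G C Q).ncard)) (epsT G C Q) - 1

/-- Fuelled version of the partial treewidth recursion. -/
def ptwAux (G : SimpleGraph V) (C : Set V) : ℕ → TDQuint V → ℕ
  | 0, Q => loctw G C Q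
  | m + 1, Q =>
    if Q.LC = ∅ then loctw G C Q
    else
      match Q.tauL with
      | TDOp.introduce u =>
          max (loctw G C Q)
            (sInf {n | ∃ τ,
              ValidQuintT G C ⟨τ, Q.LC, Q.XC \ {u}, Q.RC ∪ {u}, TDOp.introduce u⟩ ∧
              n = ptwAux G C m ⟨τ, Q.LC, Q.XC \ {u}, Q.RC ∪ {u}, TDOp.introduce u⟩})
      | TDOp.forget u =>
          max (loctw G C Q)
            (sInf {n | ∃ τ,
              ValidQuintT G C ⟨τ, Q.LC \ {u}, Q.XC ∪ {u}, Q.RC, TDOp.forget u⟩ ∧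
              n = ptwAux G C m ⟨τ, Q.LC \ {u}, Q.XC ∪ {u}, Q.RC, TDOp.forget u⟩})
      | TDOp.join _ L1 L2 =>
          max (loctw G C Q)
            (max
              (sInf {n | ∃ τ,
                ValidQuintT G C ⟨τ, L1, Q.XC, Q.RC ∪ L2, TDOp.join Q.XC L1 L2⟩ ∧
                n = ptwAux G C m ⟨τ, L1, Q.XC, Q.RC ∪ L2, TDOp.join Q.XC L1 L2⟩})
              (sInf {n | ∃ τ,
                ValidQuintT G C ⟨τ, L2, Q.XC, Q.RC ∪ L1, TDOp.join Q.XC L1 L2⟩ ∧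
                n = ptwAux G C m ⟨τ, L2, Q.XC, Q.RC ∪ L1, TDOp.join Q.XC L1 L2⟩}))

/-- The partial treewidth `ptw(Q)` of a quintuple (defined with sufficient fuel:
each recursive step strictly decreases `2·|L^C| + |X^C|`). -/
def ptw (G : SimpleGraph V) (C : Set V) (Q : TDQuint V) : ℕ :=
  ptwAux G C (2 * Q.LC.ncard + Q.XC.ncard) Q

/-- `X^C_-` : the bag trace just below `imin`. -/
def XCminus (Q : TDQuint V) : Set V :=
  match Q.tauL with
  | TDOp.introduce u => Q.XC \ {u}
  | TDOp.forget u => Q.XC ∪ {u}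
  | TDOp.join _ _ _ => Q.XC

/-- `X^C_+` : the bag trace just above `imax`. -/
def XCplus (Q : TDQuint V) : Set V :=
  match Q.tauR with
  | TDOp.introduce v => Q.XC ∪ {v}
  | TDOp.forget v => Q.XC \ {v}
  | TDOp.join _ _ _ => Q.XC

/-- `XF^S(Q)` (pathwidth version). -/
def XFPset (G : SimpleGraph V) (C : Set V) (Q : TDQuint V) : Set V :=
  {x | x ∉ C ∧ G.neighborSet x ⊆ Q.XC ∧
    (XCminus Q ⊂ Q.XC → ¬ G.neighborSet x ⊆ XCminus Q) ∧
    (XCplus Q ⊂ Q.XC → ¬ G.neighborSet x ⊆ XCplus Q)}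

/-- `ε(Q)` (pathwidth version). -/
def epsP (G : SimpleGraph V) (C : Set V) (Q : TDQuint V) : ℕ :=
  if (XFPset G C Q).Nonempty then 1 else 0

/-- The local pathwidth of a quintuple. -/
def locpw (G : SimpleGraph V) (C : Set V) (Q : TDQuint V) : ℕ :=
  Q.XC.ncard + (XTRset G C Q).ncard +
    max (max (XLset G C Q).ncard (XRset G C Q).ncard) (epsP G C Q) - 1

/-- Fuelled version of the partial pathwidth recursion. -/
def ppwAux (G : SimpleGraph V) (C : Set V) : ℕ → TDQuint V → ℕ
  | 0, Q => locpw G C Q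
  | m + 1, Q =>
    if ∃ u, Q.tauL = TDOp.introduce u ∧ Q.LC = ∅ ∧ Q.XC = {u} ∧ Q.RC = C \ {u} then
      locpw G C Q
    else
      match Q.tauL with
      | TDOp.introduce u =>
          max (locpw G C Q)
            (sInf {n | ∃ τ,
              ValidQuintP G C ⟨τ, Q.LC, Q.XC \ {u}, Q.RC ∪ {u}, TDOp.introduce u⟩ ∧
              n = ppwAux G C m ⟨τ, Q.LC, Q.XC \ {u}, Q.RC ∪ {u}, TDOp.introduce u⟩})
      | TDOp.forget u =>
          max (locpw G C Q)
            (sInf {n | ∃ τ,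
              ValidQuintP G C ⟨τ, Q.LC \ {u}, Q.XC ∪ {u}, Q.RC, TDOp.forget u⟩ ∧
              n = ppwAux G C m ⟨τ, Q.LC \ {u}, Q.XC ∪ {u}, Q.RC, TDOp.forget u⟩})
      | TDOp.join _ _ _ => locpw G C Q

/-- The partial pathwidth `ppw(Q)` of a quintuple. -/
def ppw (G : SimpleGraph V) (C : Set V) (Q : TDQuint V) : ℕ :=
  ppwAux G C (2 * Q.LC.ncard + Q.XC.ncard) Q

end

end

section AuxForStatement10

namespace RootedTreeDecomp

variable {V ι : Type} [DecidableEq V] {G : SimpleGraph V} (t : RootedTreeDecomp V ι G)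

lemma anc_refl (i : ι) : t.anc i i := ⟨0, rfl⟩

lemma anc_trans {i j k : ι} (h1 : t.anc i j) (h2 : t.anc j k) : t.anc i k := by
  obtain ⟨n, hn⟩ := h1; obtain ⟨m, hm⟩ := h2
  exact ⟨n + m, by rw [Function.iterate_add_apply, hm, hn]⟩

lemma iterate_root (n : ℕ) : t.parent^[n] t.root = t.root := by
  induction n with
  | zero => rfl
  | succ n ih => rw [Function.iterate_succ_apply', ih, t.parent_root]

lemma eq_root_of_parent_fix {i : ι} (h : t.parent i = i) : i = t.root := by
  obtain ⟨d, hd⟩ := t.reaches_root i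
  have hfix : ∀ n, t.parent^[n] i = i := by
    intro n
    induction n with
    | zero => rfl
    | succ n ih => rw [Function.iterate_succ_apply', ih, h]
  rw [hfix d] at hd
  exact hd

lemma anc_antisymm {i j : ι} (h1 : t.anc i j) (h2 : t.anc j i) : i = j := by
  obtain ⟨n, hn⟩ := h1; obtain ⟨m, hm⟩ := h2
  rcases Nat.eq_zero_or_pos (n + m) with h | h
  · have hn0 : n = 0 := by omega
    rw [hn0] at hn; exact hn.symm
  · have hcyc : t.parent^[n + m] i = i := by
      rw [Function.iterate_add_apply, hm, hn]
    have hk : ∀ k, t.parent^[k * (n + m)] i = i := by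
      intro k
      induction k with
      | zero => simp
      | succ k ih => rw [Nat.succ_mul, Function.iterate_add_apply, hcyc, ih]
    obtain ⟨d, hd⟩ := t.reaches_root i
    have hroot : t.parent^[d * (n + m)] i = t.root := by
      have hdle : d ≤ d * (n + m) := Nat.le_mul_of_pos_right d h
      have hsplit : d * (n + m) = (d * (n + m) - d) + d := by omega
      rw [hsplit, Function.iterate_add_apply, hd, t.iterate_root]
    have hi : i = t.root := (hk (d)).symm.trans hroot
    have hj : j = t.root := by rw [hi, t.iterate_root] at hm; exact hm.symm
    rw [hi, hj]

lemma children_subsingleton (ht : t.IsNicePath) (p : ι) {a b : ι}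
    (ha : a ∈ t.children p) (hb : b ∈ t.children p) : a = b := by
  rcases ht p with h | h | h
  · rw [h.1] at ha; exact absurd ha (Set.notMem_empty a)
  · obtain ⟨j, u, hc, -, -⟩ := h
    rw [hc, Set.mem_singleton_iff] at ha hb
    rw [ha, hb]
  · obtain ⟨j, u, hc, -, -⟩ := h
    rw [hc, Set.mem_singleton_iff] at ha hb
    rw [ha, hb]

lemma descend' {p j : ι} {n : ℕ} (h : t.parent^[n] j = p) (hne : p ≠ j) :
    ∃ c k, c ∈ t.children p ∧ t.parent^[k] j = c ∧ k < n := by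
  classical
  have hex : ∃ m, t.parent^[m] j = p := ⟨n, h⟩
  have hspec : t.parent^[Nat.find hex] j = p := Nat.find_spec hex
  have hm0 : Nat.find hex ≠ 0 := by
    intro h0
    rw [h0] at hspec
    exact hne hspec.symm
  obtain ⟨m, hm⟩ := Nat.exists_eq_succ_of_ne_zero hm0
  rw [hm, Function.iterate_succ_apply'] at hspec
  have hcr : t.parent^[m] j ≠ t.root := by
    intro hroot
    have hp : p = t.root := by rw [← hspec, hroot, t.parent_root]
    exact Nat.find_min hex (by omega : m < Nat.find hex) (by rw [hroot, hp])
  refine ⟨t.parent^[m] j, m, ⟨hcr, hspec⟩, rfl, ?_⟩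
  have := Nat.find_min' hex h
  omega

lemma comp_aux (ht : t.IsNicePath) :
    ∀ n i a j, t.parent^[n] i = a → t.anc a j → t.anc i j ∨ t.anc j i := by
  intro n
  induction n using Nat.strong_induction_on with
  | _ n IH =>
    intro i a j hn haj
    by_cases hia : i = a
    · subst hia; exact Or.inl haj
    by_cases hja : j = a
    · subst hja; exact Or.inr ⟨n, hn⟩
    obtain ⟨c', k, hc', hk, hkn⟩ := t.descend' hn (Ne.symm hia)
    obtain ⟨nj, hnj⟩ := haj
    obtain ⟨c, kc, hc, hkc, -⟩ := t.descend' hnj (Ne.symm hja)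
    have hcc : c' = c := t.children_subsingleton ht a hc' hc
    exact IH k hkn i c' j hk (hcc ▸ ⟨kc, hkc⟩)

lemma comparable (ht : t.IsNicePath) (i j : ι) : t.anc i j ∨ t.anc j i := by
  obtain ⟨n, hn⟩ := t.reaches_root i
  exact t.comp_aux ht n i t.root j hn (t.reaches_root j)

lemma bag_subset_subVerts (i : ι) : ↑(t.bag i) ⊆ t.subVerts i :=
  fun v hv => ⟨i, t.anc_refl i, hv⟩

lemma subVerts_mono {p j : ι} (h : t.anc p j) : t.subVerts j ⊆ t.subVerts p := by
  rintro v ⟨k, hk, hv⟩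
  exact ⟨k, t.anc_trans h hk, hv⟩

lemma anc_of_child {p j : ι} (h : j ∈ t.children p) : t.anc p j :=
  ⟨1, by simpa using h.2⟩

lemma subVerts_eq_of_child {p j : ι} (hc : t.children p = {j}) :
    t.subVerts p = ↑(t.bag p) ∪ t.subVerts j := by
  have hjc : j ∈ t.children p := by rw [hc]; rfl
  apply Set.Subset.antisymm
  · rintro v ⟨k, hk, hv⟩
    by_cases hkp : k = p
    · subst hkp; exact Or.inl hv
    · obtain ⟨n, hn⟩ := hk
      obtain ⟨c, kc, hcm, hkc, -⟩ := t.descend' hn (Ne.symm hkp)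
      rw [hc, Set.mem_singleton_iff] at hcm
      exact Or.inr ⟨k, ⟨kc, hcm ▸ hkc⟩, hv⟩
  · rintro v (hv | hv)
    · exact ⟨p, t.anc_refl p, hv⟩
    · exact t.subVerts_mono (t.anc_of_child hjc) hv

/-- A measure strictly decreasing when going down the tree. -/
noncomputable def mu [Fintype V] (i : ι) : ℕ :=
  (t.subVerts i).ncard * (Fintype.card V + 1) + (Fintype.card V - (t.bag i).card)

lemma mu_lt_parent [Fintype V] (ht : t.IsNicePath) {j : ι} (hj : j ≠ t.root) :
    t.mu j < t.mu (t.parent j) := by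
  set p := t.parent j with hp
  have hjc : j ∈ t.children p := ⟨hj, rfl⟩
  have hanc : t.anc p j := t.anc_of_child hjc
  rcases ht p with h | h | h
  · rw [h.1] at hjc; exact absurd hjc (Set.notMem_empty j)
  · obtain ⟨c, u, hc, hu, hb⟩ := h
    have hcj : j = c := by rw [hc, Set.mem_singleton_iff] at hjc; exact hjc
    subst hcj
    have hup : u ∈ t.bag p := by rw [hb]; exact Finset.mem_insert_self u _
    have hus : u ∉ t.subVerts j := by
      rintro ⟨k, hk, huk⟩
      have hbetw : betweenNodes t.parent j k p := by
        refine ⟨Or.inl hk, fun l hlk hlp => ?_⟩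
        rcases t.comparable ht l j with h' | h'
        · exact h'
        · have hjp : t.anc j p := t.anc_trans h' hlp
          have hpj : j = p := t.anc_antisymm hjp hanc
          have : j = t.root := t.eq_root_of_parent_fix (by rw [← hp]; exact hpj.symm)
          exact absurd this hj
      exact hu (t.bag_conn u k p j huk hup hbetw)
    have hsub : t.subVerts j ⊂ t.subVerts p := by
      refine ⟨t.subVerts_mono hanc, fun hsup => ?_⟩
      exact hus (hsup (t.bag_subset_subVerts p hup))
    have hlt : (t.subVerts j).ncard < (t.subVerts p).ncard :=
      Set.ncard_lt_ncard hsub (Set.toFinite _)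
    show t.mu j < t.mu p
    unfold mu
    have h1 : Fintype.card V - (t.bag j).card ≤ Fintype.card V := Nat.sub_le _ _
    calc (t.subVerts j).ncard * (Fintype.card V + 1) + (Fintype.card V - (t.bag j).card)
        < ((t.subVerts j).ncard + 1) * (Fintype.card V + 1) := by
          rw [Nat.add_mul, Nat.one_mul]; omega
      _ ≤ (t.subVerts p).ncard * (Fintype.card V + 1) := Nat.mul_le_mul_right _ hlt
      _ ≤ _ := Nat.le_add_right _ _
  · obtain ⟨c, u, hc, hu, hb⟩ := h
    have hcj : j = c := by rw [hc, Set.mem_singleton_iff] at hjc; exact hjc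
    subst hcj
    have hsub : t.subVerts p = t.subVerts j := by
      apply Set.Subset.antisymm
      · rw [t.subVerts_eq_of_child hc]
        apply Set.union_subset
        · intro v hv
          apply t.bag_subset_subVerts j
          rw [hb] at hv
          exact Finset.mem_coe.mpr (Finset.mem_of_mem_erase (Finset.mem_coe.mp hv))
        · exact subset_rfl
      · exact t.subVerts_mono hanc
    have hcard : (t.bag p).card + 1 = (t.bag j).card := by
      rw [hb]; exact Finset.card_erase_add_one hu
    have hle : (t.bag j).card ≤ Fintype.card V := by
      simpa using Finset.card_le_univ (t.bag j)
    show t.mu j < t.mu p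
    unfold mu
    rw [hsub]
    apply Nat.add_lt_add_left
    omega

lemma mu_lt_of_anc [Fintype V] (ht : t.IsNicePath) {p j : ι} (h : t.anc p j)
    (hne : j ≠ p) : t.mu j < t.mu p := by
  obtain ⟨n, hn⟩ := h
  induction n generalizing j with
  | zero => exact absurd hn hne
  | succ n IH =>
    by_cases hjr : j = t.root
    · subst hjr
      rw [t.iterate_root] at hn
      exact absurd hn hne
    · have h1 : t.mu j < t.mu (t.parent j) := t.mu_lt_parent ht hjr
      have hn' : t.parent^[n] (t.parent j) = p := by
        rw [← Function.iterate_succ_apply]; exact hn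
      by_cases hpp : t.parent j = p
      · rw [hpp] at h1; exact h1
      · exact lt_trans h1 (IH hpp hn')

end RootedTreeDecomp

end AuxForStatement10

theorem trace_nodes_form_subpath_path {V ι : Type} [Fintype V] [DecidableEq V]
    {G : SimpleGraph V} (C : Set V) (hC : IsVertexCover G C)
    (t : RootedTreeDecomp V ι G) (ht : t.IsNicePath)
    (LC XC RC : Set V) (hex : ∃ i, t.HasTrace C i LC XC RC) :
    ∃ imin imax, t.anc imax imin ∧
      ∀ i, t.HasTrace C i LC XC RC ↔ (t.anc i imin ∧ t.anc imax i) := by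
  classical
  obtain ⟨i0, hi0⟩ := hex
  -- construct imax as the highest ancestor of i0 with the given trace
  obtain ⟨d, hd⟩ := t.reaches_root i0
  set T : Finset ℕ :=
    (Finset.range (d + 1)).filter
      (fun n => t.HasTrace C (t.parent^[n] i0) LC XC RC) with hT
  have hT0 : 0 ∈ T := by
    rw [hT, Finset.mem_filter, Finset.mem_range]
    exact ⟨by omega, hi0⟩
  have hTne : T.Nonempty := ⟨0, hT0⟩
  set N := T.max' hTne with hN
  have hNT : N ∈ T := T.max'_mem hTne
  set imax := t.parent^[N] i0 with himax
  have hmaxS : t.HasTrace C imax LC XC RC := (Finset.mem_filter.mp hNT).2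
  have hmax_anc : ∀ j, t.HasTrace C j LC XC RC → t.anc imax j := by
    intro j hj
    rcases t.comparable ht i0 j with hcase | hcase
    · exact t.anc_trans ⟨N, himax.symm⟩ hcase
    · obtain ⟨m, hm⟩ := hcase
      have hm' : ∃ m' ≤ d, t.parent^[m'] i0 = j := by
        by_cases hmd : m ≤ d
        · exact ⟨m, hmd, hm⟩
        · have hroot : t.parent^[m] i0 = t.root := by
            have hsplit : m = (m - d) + d := by omega
            rw [hsplit, Function.iterate_add_apply, hd, t.iterate_root]
          exact ⟨d, le_refl d, hd.trans (hroot.symm.trans hm)⟩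
      obtain ⟨m', hm'd, hm'eq⟩ := hm'
      have hmT : m' ∈ T := by
        rw [hT, Finset.mem_filter, Finset.mem_range]
        exact ⟨by omega, by rw [hm'eq]; exact hj⟩
      have hmN : m' ≤ N := T.le_max' m' hmT
      refine ⟨N - m', ?_⟩
      rw [← hm'eq, ← Function.iterate_add_apply, himax]
      congr 1
      omega
  -- construct imin as an element with minimal measure mu
  have hMne : {n | ∃ j, t.HasTrace C j LC XC RC ∧ t.mu j = n}.Nonempty :=
    ⟨t.mu i0, i0, hi0, rfl⟩
  obtain ⟨imin, hminS, hminmu⟩ := Nat.sInf_mem hMne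
  have hmin_anc : ∀ j, t.HasTrace C j LC XC RC → t.anc j imin := by
    intro j hj
    rcases t.comparable ht j imin with h' | h'
    · exact h'
    · by_cases hji : j = imin
      · subst hji; exact t.anc_refl j
      · have h1 : t.mu j < t.mu imin := t.mu_lt_of_anc ht h' hji
        have h2 : t.mu imin ≤ t.mu j := by
          rw [hminmu]; exact Nat.sInf_le ⟨j, hj, rfl⟩
        omega
  refine ⟨imin, imax, hmax_anc imin hminS, fun i => ⟨fun h => ⟨hmin_anc i h, hmax_anc i h⟩, ?_⟩⟩
  rintro ⟨hi1, hi2⟩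
  obtain ⟨hL1, hX1, hR1⟩ := hminS
  obtain ⟨hL2, hX2, hR2⟩ := hmaxS
  -- intersections with C of subVerts agree on [imin, imax]
  have hsubC : ∀ v, v ∈ C → (v ∈ t.subVerts i ↔ v ∈ t.subVerts imin) := by
    intro v hv
    constructor
    · intro hvi
      by_contra hvmin
      have hvRC : v ∈ RC := by
        rw [hR1]
        exact ⟨⟨Set.mem_univ v, hvmin⟩, hv⟩
      rw [hR2] at hvRC
      exact hvRC.1.2 (t.subVerts_mono hi2 hvi)
    · intro hvmin
      exact t.subVerts_mono hi1 hvmin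
  -- intersections with C of bags agree on [imin, imax]
  have hbag : ∀ v, v ∈ C → (v ∈ t.bag i ↔ v ∈ t.bag imin) := by
    intro v hv
    constructor
    · intro hvbi
      by_contra hvb
      have hvmini : v ∈ t.subVerts imin :=
        (hsubC v hv).1 (t.bag_subset_subVerts i hvbi)
      obtain ⟨k, hk, hvk⟩ := hvmini
      by_cases hii : i = imin
      · subst hii; exact hvb hvbi
      · have hbetw : betweenNodes t.parent imin k i := by
          refine ⟨Or.inl hk, fun l hlk hli => ?_⟩
          rcases t.comparable ht l imin with h' | h'
          · exact h'
          · have hanc : t.anc imin i := t.anc_trans h' hli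
            exact absurd (t.anc_antisymm hanc hi1).symm hii
        exact hvb (t.bag_conn v k i imin hvk hvbi hbetw)
    · intro hvbmin
      have hvmax : v ∈ t.bag imax := by
        have hvXC : v ∈ XC := by
          rw [hX1]
          exact ⟨Finset.mem_coe.mpr hvbmin, hv⟩
        rw [hX2] at hvXC
        exact Finset.mem_coe.mp hvXC.1
      have hbetw : betweenNodes t.parent i imin imax :=
        ⟨Or.inl hi1, fun l hl1 hl2 => t.anc_trans hl2 hi2⟩
      exact t.bag_conn v imin imax i hvbmin hvmax hbetw
  refine ⟨?_, ?_, ?_⟩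
  · rw [hL1]
    ext v
    simp only [RootedTreeDecomp.Lset, Set.mem_inter_iff, Set.mem_diff, Finset.mem_coe]
    constructor
    · rintro ⟨⟨hs, hb⟩, hc⟩
      exact ⟨⟨(hsubC v hc).2 hs, fun hb' => hb ((hbag v hc).1 hb')⟩, hc⟩
    · rintro ⟨⟨hs, hb⟩, hc⟩
      exact ⟨⟨(hsubC v hc).1 hs, fun hb' => hb ((hbag v hc).2 hb')⟩, hc⟩
  · rw [hX1]
    ext v
    simp only [Set.mem_inter_iff, Finset.mem_coe]
    constructor
    · rintro ⟨hb, hc⟩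
      exact ⟨(hbag v hc).2 hb, hc⟩
    · rintro ⟨hb, hc⟩
      exact ⟨(hbag v hc).1 hb, hc⟩
  · rw [hR1]
    ext v
    simp only [RootedTreeDecomp.Rset, Set.mem_inter_iff, Set.mem_diff, Set.mem_univ, true_and]
    constructor
    · rintro ⟨hs, hc⟩
      exact ⟨fun h => hs ((hsubC v hc).1 h), hc⟩
    · rintro ⟨hs, hc⟩
      exact ⟨fun h => hs ((hsubC v hc).2 h), hc⟩
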